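/- Let 0 < q < 1 and s_1, s_2 > 1 real. Then \zeta[s_1]\zeta[s_2] = \zeta[s_1,s_2] + \zeta[s_2,s_1] + \zeta[s_1+s_2] + (1-q)\zeta[s_1+s_2-1], so in particular \zeta[s_1,s_2] + \zeta[s_2,s_1] can be expressed in terms of depth-1 q-zeta values. -/

import Mathlib

noncomputable def qnum (q : ℝ) (k : ℕ) : ℝ := (1 - q ^ k) / (1 - q)

noncomputable def qzeta (q s : ℝ) : ℝ :=
  ∑' k : ℕ+, q ^ ((s - 1) * ((k : ℕ) : ℝ)) / (qnum q k) ^ s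

noncomputable def qzeta2 (q s₁ s₂ : ℝ) : ℝ :=
  ∑' p : {p : ℕ × ℕ // p.2 < p.1 ∧ 0 < p.2},
    q ^ ((s₁ - 1) * (p.1.1 : ℝ) + (s₂ - 1) * (p.1.2 : ℝ)) /
      ((qnum q p.1.1) ^ s₁ * (qnum q p.1.2) ^ s₂)

/-!
Multiply the two series and sum over pairs `(k₁, k₂)` of positive integers: the region
`k₁ > k₂` gives `ζ[s₁,s₂]`, the region `k₁ < k₂` gives `ζ[s₂,s₁]`, and the diagonal gives
`∑ q^((s₁+s₂-2)k) / [k]_q^(s₁+s₂)`, which the identity `1 = q^k + (1 - q)[k]_q` splits into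
`ζ[s₁+s₂] + (1 - q) ζ[s₁+s₂-1]`. The rearrangement is legitimate because the terms are nonnegative
and, as `[k]_q ≥ 1`, dominated by a geometric series.
-/

theorem tsum_prod_eq_tsum_lt_add_tsum_lt_swap_add_tsum_diag {ι E : Type*} [LinearOrder ι]
    [NormedAddCommGroup E] [CompleteSpace E] {F : ι × ι → E} (hF : Summable F) :
    ∑' p, F p = ∑' p : {p : ι × ι // p.2 < p.1}, F p.1
      + ∑' p : {p : ι × ι // p.2 < p.1}, F p.1.swap + ∑' i, F (i, i) := by
  let A : Set (ι × ι) := {p | p.2 < p.1}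
  have hcover : A ∪ Prod.swap '' A ∪ Set.range (fun i => (i, i)) = Set.univ := by
    ext ⟨a, b⟩
    simp only [A, Set.image_swap_eq_preimage_swap, Set.mem_union, Set.mem_ofPred_eq,
      Set.mem_preimage, Prod.fst_swap, Prod.snd_swap, Set.mem_range, Prod.mk.injEq,
      Set.mem_univ, iff_true]
    rcases lt_trichotomy a b with h | rfl | h
    · exact Or.inl (Or.inr h)
    · exact Or.inr ⟨a, rfl, rfl⟩
    · exact Or.inl (Or.inl h)
  have hdisj₁ : Disjoint A (Prod.swap '' A) := by
    rw [Set.disjoint_left]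
    rintro ⟨a, b⟩ (h : b < a) ⟨⟨c, d⟩, (h' : d < c), he⟩
    simp only [Prod.swap_prod_mk, Prod.mk.injEq] at he
    obtain ⟨rfl, rfl⟩ := he
    exact lt_asymm h h'
  have hdisj₂ : Disjoint (A ∪ Prod.swap '' A) (Set.range (fun i => (i, i))) := by
    rw [Set.disjoint_left]
    rintro _ hp ⟨i, rfl⟩
    simp [A, Set.image_swap_eq_preimage_swap] at hp
  rw [← tsum_univ, ← hcover,
    Summable.tsum_union_disjoint hdisj₂ (hF.subtype _) (hF.subtype _),
    Summable.tsum_union_disjoint hdisj₁ (hF.subtype _) (hF.subtype _),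
    tsum_image F Prod.swap_injective.injOn, tsum_range F fun i j h => congrArg Prod.fst h]
  rfl

theorem tsum_mul_tsum_eq_stuffle {ι R : Type*} [LinearOrder ι] [NormedCommRing R]
    [CompleteSpace R] {f g : ι → R} (hf : Summable f) (hg : Summable g)
    (hfg : Summable fun p : ι × ι => f p.1 * g p.2) :
    (∑' i, f i) * (∑' j, g j) = ∑' p : {p : ι × ι // p.2 < p.1}, f p.1.1 * g p.1.2
      + ∑' p : {p : ι × ι // p.2 < p.1}, g p.1.1 * f p.1.2 + ∑' i, f i * g i := by
  rw [hf.tsum_mul_tsum hg hfg, tsum_prod_eq_tsum_lt_add_tsum_lt_swap_add_tsum_diag hfg]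
  simp only [Prod.fst_swap, Prod.snd_swap, mul_comm (f _)]

section QZeta

variable {q : ℝ}

theorem qnum_eq_geom_sum (hq : q ≠ 1) (k : ℕ) : qnum q k = ∑ i ∈ Finset.range k, q ^ i := by
  rw [qnum, geom_sum_eq hq, ← neg_div_neg_eq, neg_sub, neg_sub]

theorem one_le_qnum (hq0 : 0 ≤ q) (hq1 : q ≠ 1) {k : ℕ} (hk : 0 < k) : 1 ≤ qnum q k := by
  obtain ⟨n, rfl⟩ := Nat.exists_eq_add_one_of_ne_zero hk.ne'
  rw [qnum_eq_geom_sum hq1, Finset.sum_range_succ', pow_zero, le_add_iff_nonneg_left]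
  positivity

theorem one_sub_mul_qnum (hq : q ≠ 1) (k : ℕ) : (1 - q) * qnum q k = 1 - q ^ k :=
  mul_div_cancel₀ _ (sub_ne_zero.mpr hq.symm)

noncomputable def qzetaTerm (q s : ℝ) (k : ℕ+) : ℝ := q ^ ((s - 1) * ((k : ℕ) : ℝ)) / qnum q k ^ s

theorem qzeta_eq_tsum_qzetaTerm (s : ℝ) : qzeta q s = ∑' k, qzetaTerm q s k := rfl

theorem qzetaTerm_nonneg (hq0 : 0 ≤ q) (hq1 : q ≠ 1) (s : ℝ) (k : ℕ+) : 0 ≤ qzetaTerm q s k :=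
  div_nonneg (Real.rpow_nonneg hq0 _)
    (Real.rpow_nonneg (zero_le_one.trans (one_le_qnum hq0 hq1 k.pos)) _)

theorem summable_qzetaTerm (hq0 : 0 < q) (hq1 : q < 1) {s : ℝ} (hs : 1 < s) :
    Summable (qzetaTerm q s) := by
  have hgeom : Summable fun k : ℕ+ => (q ^ (s - 1)) ^ (k : ℕ) :=
    (summable_geometric_of_lt_one (Real.rpow_nonneg hq0.le _)
      (Real.rpow_lt_one hq0.le hq1 (by linarith))).comp_injective PNat.coe_injective
  refine hgeom.of_nonneg_of_le (qzetaTerm_nonneg hq0.le hq1.ne _) fun k => ?_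
  rw [← Real.rpow_natCast, ← Real.rpow_mul hq0.le]
  exact div_le_self (Real.rpow_nonneg hq0.le _)
    (Real.one_le_rpow (one_le_qnum hq0.le hq1.ne k.pos) (by linarith))

theorem qzetaTerm_mul_qzetaTerm (hq : 0 < q) (s₁ s₂ : ℝ) (m n : ℕ+) :
    qzetaTerm q s₁ m * qzetaTerm q s₂ n
      = q ^ ((s₁ - 1) * ((m : ℕ) : ℝ) + (s₂ - 1) * ((n : ℕ) : ℝ))
          / (qnum q m ^ s₁ * qnum q n ^ s₂) := by
  rw [qzetaTerm, qzetaTerm, div_mul_div_comm, Real.rpow_add hq]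

theorem qzetaTerm_mul_qzetaTerm_self (hq0 : 0 < q) (hq1 : q ≠ 1) (s₁ s₂ : ℝ) (k : ℕ+) :
    qzetaTerm q s₁ k * qzetaTerm q s₂ k
      = qzetaTerm q (s₁ + s₂) k + (1 - q) * qzetaTerm q (s₁ + s₂ - 1) k := by
  have hx : 0 < qnum q k := zero_lt_one.trans_le (one_le_qnum hq0.le hq1 k.pos)
  have hnum : q ^ ((s₁ + s₂ - 1) * ((k : ℕ) : ℝ))
      = q ^ ((s₁ + s₂ - 1 - 1) * ((k : ℕ) : ℝ)) * q ^ (k : ℕ) := by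
    rw [← Real.rpow_natCast q, ← Real.rpow_add hq0]
    ring_nf
  have hden : qnum q k ^ (s₁ + s₂) = qnum q k ^ (s₁ + s₂ - 1) * qnum q k := by
    rw [← Real.rpow_add_one hx.ne', sub_add_cancel]
  rw [qzetaTerm_mul_qzetaTerm hq0, ← Real.rpow_add hx, qzetaTerm, qzetaTerm, hnum, hden,
    show (s₁ - 1) * ((k : ℕ) : ℝ) + (s₂ - 1) * ((k : ℕ) : ℝ)
      = (s₁ + s₂ - 1 - 1) * ((k : ℕ) : ℝ) by ring]
  field_simp
  linear_combination -one_sub_mul_qnum hq1 k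

def pnatPairLtEquiv : {p : ℕ+ × ℕ+ // p.2 < p.1} ≃ {p : ℕ × ℕ // p.2 < p.1 ∧ 0 < p.2} where
  toFun p := ⟨(p.1.1, p.1.2), p.2, p.1.2.pos⟩
  invFun p := ⟨(⟨p.1.1, p.2.2.trans p.2.1⟩, ⟨p.1.2, p.2.2⟩), p.2.1⟩
  left_inv _ := rfl
  right_inv _ := rfl

theorem qzeta2_eq_tsum_qzetaTerm (hq : 0 < q) (s₁ s₂ : ℝ) :
    qzeta2 q s₁ s₂
      = ∑' p : {p : ℕ+ × ℕ+ // p.2 < p.1}, qzetaTerm q s₁ p.1.1 * qzetaTerm q s₂ p.1.2 := by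
  rw [qzeta2, ← pnatPairLtEquiv.tsum_eq]
  exact tsum_congr fun p => (qzetaTerm_mul_qzetaTerm hq s₁ s₂ _ _).symm

end QZeta

theorem qstuffle_depth_two (q s₁ s₂ : ℝ) (hq0 : 0 < q) (hq1 : q < 1)
    (h₁ : 1 < s₁) (h₂ : 1 < s₂) :
    qzeta q s₁ * qzeta q s₂
      = qzeta2 q s₁ s₂ + qzeta2 q s₂ s₁ + qzeta q (s₁ + s₂)
        + (1 - q) * qzeta q (s₁ + s₂ - 1) := by
  have hf₁ := summable_qzetaTerm hq0 hq1 h₁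
  have hf₂ := summable_qzetaTerm hq0 hq1 h₂
  have hprod := hf₁.mul_of_nonneg hf₂ (qzetaTerm_nonneg hq0.le hq1.ne s₁)
    (qzetaTerm_nonneg hq0.le hq1.ne s₂)
  have hdiag : ∑' k, qzetaTerm q s₁ k * qzetaTerm q s₂ k
      = qzeta q (s₁ + s₂) + (1 - q) * qzeta q (s₁ + s₂ - 1) := by
    rw [tsum_congr (qzetaTerm_mul_qzetaTerm_self hq0 hq1.ne s₁ s₂),
      (summable_qzetaTerm hq0 hq1 (by linarith)).tsum_add
        ((summable_qzetaTerm hq0 hq1 (by linarith)).mul_left _),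
      tsum_mul_left]
    rfl
  rw [qzeta_eq_tsum_qzetaTerm, qzeta_eq_tsum_qzetaTerm, tsum_mul_tsum_eq_stuffle hf₁ hf₂ hprod,
    hdiag, qzeta2_eq_tsum_qzetaTerm hq0, qzeta2_eq_tsum_qzetaTerm hq0, ← add_assoc]
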